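/- Let w be a Lyndon binary word of length n with strictly more 1's than 0's and unmatched positions p_1 < … < p_m (all carrying 1). For every 0 ≤ t ≤ m, the matched pairs of the word w_t are exactly the matched pairs of w together with the nested pairs {p_s, p_{m+1−s}} for 1 ≤ s ≤ min(t, m−t), and the unmatched positions of w_t are exactly the positions p_s with min(t, m−t) < s ≤ max(t, m−t). In particular, the pairs created in the successive passage from w to w_m are nested, each new pair being innermost among those created so far. -/

import Mathlib

/-!
Common definitions: binary words of length `n`, rotations, necklaces (the quotient
poset `Bₙ/Cₙ`), the cyclic matching procedure, Lyndon words, the map `φ`,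
crossing pairs, and the words `w_t`.

Throughout, a binary word of length `n` is a function `Fin n → Bool`, where `true`
encodes the letter `1` and `false` the letter `0`.
-/

/-- A binary word of length `n`: `true` encodes the letter `1`, `false` the letter `0`. -/
abbrev Word (n : ℕ) := Fin n → Bool

variable {n : ℕ} [NeZero n]

/-- The rotation `σ_i`, shifting the letters of `w` cyclically by `i` positions (so the
letter at position `j` of `w` appears at position `j + i` of `rot i w`). -/
def rot (i : Fin n) (w : Word n) : Word n := fun j => w (j - i)

lemma rot_rot (i j : Fin n) (w : Word n) : rot i (rot j w) = rot (j + i) w := by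
  funext k
  simp [rot, sub_sub, add_comm]

/-- Two words are equivalent when one is a cyclic rotation of the other. -/
def rotSetoid (n : ℕ) [NeZero n] : Setoid (Word n) where
  r w w' := ∃ i : Fin n, rot i w = w'
  iseqv := by
    refine ⟨fun w => ⟨0, ?_⟩, ?_, ?_⟩
    · funext j; simp [rot]
    · rintro w w' ⟨i, rfl⟩
      refine ⟨-i, ?_⟩
      rw [rot_rot]
      funext j; simp [rot]
    · rintro w w' w'' ⟨i, rfl⟩ ⟨j, rfl⟩
      exact ⟨i + j, (rot_rot j i w).symm⟩

/-- A necklace: an equivalence class of binary words under cyclic rotation. -/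
abbrev Necklace (n : ℕ) [NeZero n] := Quotient (rotSetoid n)

/-- The necklace of a word. -/
def nec (w : Word n) : Necklace n := Quotient.mk (rotSetoid n) w

/-- The number of `1`s in a word. -/
def wt (w : Word n) : ℕ := (Finset.univ.filter fun i => w i = true).card

/-- The number of `0`s in a word. -/
def zeros (w : Word n) : ℕ := (Finset.univ.filter fun i => w i = false).card

/-- The rank of a necklace: the number of `1`s in any representative. -/
noncomputable def rank (u : Necklace n) : ℕ := wt (Quotient.out u)

/-- The set of positions belonging to some pair of `M`. -/
def matchedPos (M : Finset (Fin n × Fin n)) : Finset (Fin n) :=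
  M.image Prod.fst ∪ M.image Prod.snd

/-- `j` is the first position outside `S` encountered strictly after `i` in the cyclic
order `i+1, i+2, …` (indices mod `n`). -/
def FirstAfter (S : Finset (Fin n)) (i j : Fin n) : Prop :=
  j ∉ S ∧ j ≠ i ∧ ∀ k : Fin n, k ∉ S → k ≠ i → (j - i).val ≤ (k - i).val

/-- One step of the cyclic matching procedure on the word `w`: choose an as-yet-unmatched
position `i` carrying the letter `0` such that the first as-yet-unmatched position `j`
after `i` in cyclic order carries the letter `1`, and declare `{i, j}` a matched pair
(recorded as the ordered pair `(i, j)`, the `0`-position first). -/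
inductive MatchStep (w : Word n) :
    Finset (Fin n × Fin n) → Finset (Fin n × Fin n) → Prop
  | step {M : Finset (Fin n × Fin n)} {i j : Fin n}
      (hi : i ∉ matchedPos M) (hw : w i = false)
      (hj : FirstAfter (matchedPos M) i j) (hj1 : w j = true) :
      MatchStep w M (insert (i, j) M)

/-- A maximal execution of the cyclic matching procedure on `w`, starting from the empty
matching: `M` is reachable from `∅` by matching steps and no further step is possible. -/
def IsMaximalMatching (w : Word n) (M : Finset (Fin n × Fin n)) : Prop :=
  Relation.ReflTransGen (MatchStep w) ∅ M ∧ ∀ M', ¬ MatchStep w M M'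

/-- The cyclic matching of `w`: the set of matched pairs produced by (any) maximal
execution of the cyclic matching procedure. -/
noncomputable def matching (w : Word n) : Finset (Fin n × Fin n) :=
  letI := Classical.dec (∃ M, IsMaximalMatching w M)
  if h : ∃ M, IsMaximalMatching w M then h.choose else ∅

/-- The unmatched positions of `w`: positions belonging to no matched pair. -/
noncomputable def unmatchedPos (w : Word n) : Finset (Fin n) :=
  Finset.univ \ matchedPos (matching w)

/-- Lexicographic comparison of words with respect to the letter order `1 ≺ 0`
(recall `true` encodes `1` and `false` encodes `0`). -/
def lexLE (w w' : Word n) : Prop :=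
  w = w' ∨ ∃ i : Fin n, (∀ j : Fin n, j < i → w j = w' j) ∧ w i = true ∧ w' i = false

/-- A word is Lyndon if it is lexicographically smallest among all of its rotations,
with respect to the letter order `1 ≺ 0`. -/
def IsLyndon (w : Word n) : Prop := ∀ i : Fin n, lexLE w (rot i w)

/-- The Lyndon rearrangement of `w`: its lexicographically smallest rotation. -/
noncomputable def lyndonOf (w : Word n) : Word n :=
  letI := Classical.dec (∃ i : Fin n, IsLyndon (rot i w))
  if h : ∃ i : Fin n, IsLyndon (rot i w) then rot h.choose w else w

/-- Change the letter at the rightmost unmatched position of `w` to `0`. -/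
noncomputable def flipTop (w : Word n) : Word n :=
  if h : (unmatchedPos w).Nonempty then
    Function.update w ((unmatchedPos w).max' h) false
  else w

/-- The map `φ`: take the Lyndon rearrangement of a representative and change the letter
at its rightmost unmatched position (which carries a `1` on the upper half of ranks)
to `0`. -/
noncomputable def phi (u : Necklace n) : Necklace n :=
  nec (flipTop (lyndonOf (Quotient.out u)))

/-- `x` lies strictly inside the cyclic arc running from `i` (exclusive) to `k`
(exclusive), in the cyclic order of positions. -/
def StrictBtw (i x k : Fin n) : Prop :=
  0 < (x - i).val ∧ (x - i).val < (k - i).val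

/-- The pairs `{i, k}` and `{j, l}` cross: exactly one of `j, l` lies strictly inside one
of the two cyclic arcs determined by `i` and `k`. -/
def Crosses (i k j l : Fin n) : Prop := Xor' (StrictBtw i j k) (StrictBtw i l k)

/-- `wT w t` is the word obtained from `w` by changing the letters at the last `t`
unmatched positions of `w` to `0`; that is, if the unmatched positions of `w` are
`p₁ < … < p_m`, the positions `p_{m-t+1}, …, p_m` are changed to `0`. -/
noncomputable def wT (w : Word n) (t : ℕ) : Word n := fun j =>
  if j ∈ unmatchedPos w ∧ ((unmatchedPos w).filter fun k => j ≤ k).card ≤ t then false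
  else w j

/-- The order on necklaces (the poset `Bₙ/Cₙ`): `u ≤ v` iff there are representatives
`w` of `u` and `w'` of `v` such that every position carrying `1` in `w` also carries `1`
in `w'`. -/
def nle (u v : Necklace n) : Prop :=
  ∃ w w' : Word n, nec w = u ∧ nec w' = v ∧ ∀ i, w i = true → w' i = true

/-- The strict order on necklaces. -/
def nlt (u v : Necklace n) : Prop := nle u v ∧ u ≠ v

/-- `v` covers `u` in `Bₙ/Cₙ`: `u < v` and there is no `z` with `u < z < v`. -/
def ncovBy (u v : Necklace n) : Prop := nlt u v ∧ ∀ z, nlt u z → ¬ nlt z v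

/-- A chain top: a necklace `v` in the upper half of ranks (`2·rank v ≥ n`) which is not
the image under `φ` of any necklace in the strict upper half of ranks. -/
def IsChainTop (v : Necklace n) : Prop :=
  n ≤ 2 * rank v ∧ ∀ u : Necklace n, n < 2 * rank u → phi u ≠ v

/-- The `φ`-string below the chain top `v`: the necklaces of the words `w_t`,
`0 ≤ t ≤ m`, where `w` is the Lyndon representative of `v` and `m = 2·rank v − n`. -/
noncomputable def chainOf (v : Necklace n) : Set (Necklace n) :=
  { u | ∃ t ≤ 2 * rank v - n, u = nec (wT (lyndonOf (Quotient.out v)) t) }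

/-!
The cyclic matching is confluent (matching steps satisfy a diamond lemma), so it may be computed
in any order. Since `w` has more `1`s than `0`s, its unmatched positions `p₁ < … < p_m` all carry
`1`, and `w_t` differs from `w` only there; hence the matching of `w` is a partial run of the
procedure on `w_t`, after which the unmatched letters read `1^(m-t) 0^t`. Once the pairs
`{p_{m+1-s}, p_s}`, `s ≤ k`, are formed, the first unmatched position after `p_{m-k}` is `p_{k+1}`
(wrapping around), so the next step matches them as long as `k < min(t, m-t)`; then all
remaining unmatched letters agree and the procedure stops.
-/

open Finset Relation

section CyclicMatching

variable {n : ℕ}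

lemma Fin.val_sub_eq_ite {m : ℕ} (a b : Fin m) :
    ((a - b : Fin m) : ℕ) = if (b : ℕ) ≤ a then (a : ℕ) - b else m + a - b := by
  split_ifs with h
  · exact Fin.coe_sub_iff_le.mpr h
  · exact Fin.coe_sub_iff_lt.mpr (not_le.mp h)

lemma mem_matchedPos {M : Finset (Fin n × Fin n)} {x : Fin n} :
    x ∈ matchedPos M ↔ ∃ q ∈ M, q.1 = x ∨ q.2 = x := by
  simp only [matchedPos, mem_union, mem_image, ← exists_or, ← and_or_left]

lemma matchedPos_insert (i j : Fin n) (M : Finset (Fin n × Fin n)) :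
    matchedPos (insert (i, j) M) = insert i (insert j (matchedPos M)) := by
  rw [matchedPos, matchedPos, image_insert, image_insert, insert_union, union_insert,
    insert_comm]

lemma matchedPos_union (M N : Finset (Fin n × Fin n)) :
    matchedPos (M ∪ N) = matchedPos M ∪ matchedPos N := by
  simp only [matchedPos, image_union, union_union_union_comm]

lemma matchedPos_mono {M N : Finset (Fin n × Fin n)} (h : M ⊆ N) :
    matchedPos M ⊆ matchedPos N :=
  union_subset_union (image_subset_image h) (image_subset_image h)

section FirstAfter

variable {S : Finset (Fin n)} {i j : Fin n}

lemma FirstAfter.right_unique {j' : Fin n} (h : FirstAfter S i j) (h' : FirstAfter S i j') :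
    j = j' := by
  have h₁ := h.2.2 j' h'.1 h'.2.1
  have h₂ := h'.2.2 j h.1 h.2.1
  rw [Fin.val_sub_eq_ite, Fin.val_sub_eq_ite] at h₁ h₂
  ext
  split_ifs at h₁ h₂ <;> omega

lemma FirstAfter.left_unique {i' : Fin n} (h : FirstAfter S i j) (h' : FirstAfter S i' j)
    (hi : i ∉ S) (hi' : i' ∉ S) : i = i' := by
  by_contra hii'
  have h₁ := h.2.2 i' hi' (Ne.symm hii')
  have h₂ := h'.2.2 i hi hii'
  have : (i : ℕ) ≠ i' := Fin.val_ne_of_ne hii'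
  have : (j : ℕ) ≠ i := Fin.val_ne_of_ne h.2.1
  have : (j : ℕ) ≠ i' := Fin.val_ne_of_ne h'.2.1
  rw [Fin.val_sub_eq_ite, Fin.val_sub_eq_ite] at h₁ h₂
  split_ifs at h₁ h₂ <;> omega

lemma FirstAfter.mono {T : Finset (Fin n)} (h : FirstAfter S i j) (hST : S ⊆ T) (hj : j ∉ T) :
    FirstAfter T i j :=
  ⟨hj, h.2.1, fun k hk => h.2.2 k fun hkS => hk (hST hkS)⟩

lemma firstAfter_of_forall_mem_Icc (hj : j ∉ S) (hji : j < i)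
    (hS : ∀ k ∉ S, j ≤ k ∧ k ≤ i) : FirstAfter S i j := by
  refine ⟨hj, hji.ne, fun k hk hki => ?_⟩
  obtain ⟨hjk, hki'⟩ := hS k hk
  rw [Fin.val_sub_eq_ite, Fin.val_sub_eq_ite]
  split_ifs <;> omega

end FirstAfter

section MatchStep

variable {w : Word n} {M N : Finset (Fin n × Fin n)}

lemma MatchStep.ssubset (h : MatchStep w M N) : M ⊂ N := by
  obtain ⟨hi, -, -, -⟩ := h
  exact ssubset_insert fun hM => hi (mem_matchedPos.mpr ⟨_, hM, Or.inl rfl⟩)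

lemma matchStep_insert_insert {i j i' j' : Fin n} (hi : i ∉ matchedPos M) (hw : w i = false)
    (hj : FirstAfter (matchedPos M) i j) (hj1 : w j = true)
    (hii' : i ≠ i') (hij' : i ≠ j') (hji' : j ≠ i') (hjj' : j ≠ j') :
    MatchStep w (insert (i', j') M) (insert (i, j) (insert (i', j') M)) := by
  have hsub : matchedPos M ⊆ matchedPos (insert (i', j') M) := matchedPos_mono (subset_insert _ _)
  refine .step ?_ hw (hj.mono hsub ?_) hj1 <;>
    simp only [matchedPos_insert, Finset.mem_insert, not_or]
  exacts [⟨hii', hij', hi⟩, ⟨hji', hjj', hj.1⟩]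

lemma MatchStep.diamond {M₁ M₂ : Finset (Fin n × Fin n)} (h₁ : MatchStep w M M₁)
    (h₂ : MatchStep w M M₂) : M₁ = M₂ ∨ ∃ M₃, MatchStep w M₁ M₃ ∧ MatchStep w M₂ M₃ := by
  cases h₁ with | @step i₁ j₁ hi₁ hw₁ hj₁ hj₁' =>
  cases h₂ with | @step i₂ j₂ hi₂ hw₂ hj₂ hj₂' =>
  by_cases hii : i₁ = i₂
  · subst hii
    rw [hj₁.right_unique hj₂]
    exact Or.inl rfl
  have hj₁i₂ : j₁ ≠ i₂ := fun h => by simp [h, hw₂] at hj₁'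
  have hj₂i₁ : j₂ ≠ i₁ := fun h => by simp [h, hw₁] at hj₂'
  have hjj : j₁ ≠ j₂ := by
    rintro rfl
    exact hii (hj₁.left_unique hj₂ hi₁ hi₂)
  refine Or.inr ⟨insert (i₂, j₂) (insert (i₁, j₁) M), ?_, ?_⟩
  · exact matchStep_insert_insert hi₂ hw₂ hj₂ hj₂' (Ne.symm hii) hj₁i₂.symm hj₂i₁ hjj.symm
  · rw [insert_comm]
    exact matchStep_insert_insert hi₁ hw₁ hj₁ hj₁' hii hj₂i₁.symm hj₁i₂ hjj

lemma IsMaximalMatching.unique {M₁ M₂ : Finset (Fin n × Fin n)} (h₁ : IsMaximalMatching w M₁)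
    (h₂ : IsMaximalMatching w M₂) : M₁ = M₂ := by
  obtain ⟨M, h₁M, h₂M⟩ := church_rosser (fun _ _ _ hb hc => by
    rcases hb.diamond hc with rfl | ⟨M₃, hb₃, hc₃⟩
    · exact ⟨_, .refl, .refl⟩
    · exact ⟨M₃, .single hb₃, .single hc₃⟩) h₁.1 h₂.1
  have stuck {M' : Finset (Fin n × Fin n)} (hM' : IsMaximalMatching w M')
      (h : ReflTransGen (MatchStep w) M' M) : M' = M :=
    h.cases_head.resolve_right fun ⟨c, hc, _⟩ => hM'.2 c hc
  rw [stuck h₁ h₁M, stuck h₂ h₂M]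

lemma exists_isMaximalMatching (w : Word n) : ∃ M, IsMaximalMatching w M := by
  obtain ⟨M, hM, hmax⟩ := (wellFounded_gt (α := Finset (Fin n × Fin n))).has_min
    {N | ReflTransGen (MatchStep w) ∅ N} ⟨∅, .refl⟩
  exact ⟨M, hM, fun N hN => hmax N (hM.tail hN) hN.ssubset⟩

lemma isMaximalMatching_matching (w : Word n) : IsMaximalMatching w (matching w) := by
  have h := exists_isMaximalMatching w
  rw [matching, dif_pos h]
  exact h.choose_spec

lemma matching_eq_of_isMaximalMatching (h : IsMaximalMatching w M) : matching w = M :=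
  (isMaximalMatching_matching w).unique h

lemma Relation.ReflTransGen.matchStep_of_eqOn {w' : Word n} (h : ReflTransGen (MatchStep w) M N)
    (hw : ∀ x ∈ matchedPos N, w' x = w x) : ReflTransGen (MatchStep w') M N := by
  induction h with
  | refl => exact .refl
  | @tail L _ _ hstep ih =>
    cases hstep with | @step i j hi hwi hj hwj =>
    have hij : i ∈ matchedPos (insert (i, j) L) ∧ j ∈ matchedPos (insert (i, j) L) := by
      simp only [matchedPos_insert, Finset.mem_insert, true_or, or_true, and_self]
    refine .tail (ih fun x hx => hw x (matchedPos_mono (subset_insert _ _) hx))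
      (.step hi ((hw i hij.1).trans hwi) hj ((hw j hij.2).trans hwj))

lemma card_sdiff_matchedPos_add_card (h : ReflTransGen (MatchStep w) ∅ M) (b : Bool) :
    ((univ.filter (w · = b)) \ matchedPos M).card + M.card = (univ.filter (w · = b)).card := by
  induction h with
  | refl => simp [matchedPos]
  | @tail M _ _ hstep ih =>
    cases hstep with | @step i j hi hwi hj hwj =>
    have hnew : (i, j) ∉ M := fun hM => hi (mem_matchedPos.mpr ⟨_, hM, Or.inl rfl⟩)
    rw [matchedPos_insert, sdiff_insert, sdiff_insert, card_insert_of_notMem hnew, ← ih]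
    cases b
    · have hj' : j ∉ univ.filter (w · = false) \ matchedPos M := by simp [hwj]
      have hi' : i ∈ univ.filter (w · = false) \ matchedPos M := by simp [hwi, hi]
      rw [erase_eq_of_notMem hj', ← card_erase_add_one hi']
      omega
    · have hj' : j ∈ univ.filter (w · = true) \ matchedPos M := by simp [hwj, hj.1]
      have hi' : i ∉ (univ.filter (w · = true) \ matchedPos M).erase j := by simp [hwi]
      rw [erase_eq_of_notMem hi', ← card_erase_add_one hj']
      omega

lemma exists_matchStep_iff : (∃ N, MatchStep w M N) ↔
    ∃ i j, i ∉ matchedPos M ∧ j ∉ matchedPos M ∧ w i = false ∧ w j = true := by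
  refine ⟨fun ⟨_, ⟨hi, hwi, hj, hwj⟩⟩ => ⟨_, _, hi, hj.1, hwi, hwj⟩, ?_⟩
  rintro ⟨i₀, j₀, hi₀, hj₀, hwi₀, hwj₀⟩
  -- an unmatched `0` followed by an unmatched `1` at minimal cyclic distance is matchable
  set P := univ.filter fun q : Fin n × Fin n =>
    q.1 ∉ matchedPos M ∧ q.2 ∉ matchedPos M ∧ w q.1 = false ∧ w q.2 = true
  obtain ⟨⟨i, j⟩, hq, hmin⟩ := P.exists_min_image (fun q => ((q.2 - q.1 : Fin n) : ℕ))
    ⟨(i₀, j₀), by simp [P, hi₀, hj₀, hwi₀, hwj₀]⟩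
  simp only [P, mem_filter, mem_univ, true_and] at hq hmin
  obtain ⟨hi, hj, hwi, hwj⟩ := hq
  have hji : j ≠ i := fun h => by simp [h, hwi] at hwj
  refine ⟨_, .step hi hwi ⟨hj, hji, fun k hk hki => ?_⟩ hwj⟩
  by_contra! hlt
  cases hwk : w k
  · have hkj : ((j - i : Fin n) : ℕ) ≤ (j - k : Fin n) := hmin (k, j) ⟨hk, hj, hwk, hwj⟩
    rw [Fin.val_sub_eq_ite, Fin.val_sub_eq_ite] at hlt hkj
    split_ifs at hlt hkj <;> omega
  · exact hlt.not_ge (hmin (i, k) ⟨hi, hk, hwi, hwk⟩)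

lemma IsMaximalMatching.eq_of_notMem_matchedPos (h : IsMaximalMatching w M) {i j : Fin n}
    (hi : i ∉ matchedPos M) (hj : j ∉ matchedPos M) : w i = w j := by
  by_contra hij
  obtain ⟨N, hN⟩ : ∃ N, MatchStep w M N := by
    cases hwi : w i <;> cases hwj : w j <;> simp only [hwi, hwj, not_true] at hij
    exacts [exists_matchStep_iff.mpr ⟨i, j, hi, hj, hwi, hwj⟩,
      exists_matchStep_iff.mpr ⟨j, i, hj, hi, hwj, hwi⟩]
  exact h.2 N hN

lemma eq_true_of_mem_unmatchedPos (hmaj : zeros w < wt w) {i : Fin n}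
    (hi : i ∈ unmatchedPos w) : w i = true := by
  have hmax := isMaximalMatching_matching w
  rw [unmatchedPos, mem_sdiff] at hi
  by_contra hwi
  have hno1 : (univ.filter (w · = true)) \ matchedPos (matching w) = ∅ := by
    refine eq_empty_of_forall_notMem fun j hj => ?_
    simp only [mem_sdiff, mem_filter, mem_univ, true_and] at hj
    exact hwi (hmax.eq_of_notMem_matchedPos hi.2 hj.2 ▸ hj.1)
  have h1 := card_sdiff_matchedPos_add_card hmax.1 true
  have h0 := card_sdiff_matchedPos_add_card hmax.1 false
  rw [hno1, card_empty] at h1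
  unfold wt zeros at hmaj
  omega

end MatchStep

end CyclicMatching

section NestedPairs

variable {n m : ℕ} (p : Fin m → Fin n)

def nestedPairs (k : ℕ) : Finset (Fin n × Fin n) :=
  (univ.filter fun s : Fin m => (s : ℕ) < k).image fun s => (p s.rev, p s)

lemma nestedPairs_zero : nestedPairs p 0 = ∅ := by
  simp [nestedPairs]

lemma nestedPairs_succ (r : Fin m) :
    nestedPairs p (r + 1) = insert (p r.rev, p r) (nestedPairs p r) := by
  rw [nestedPairs, nestedPairs, ← image_insert (fun s : Fin m => (p s.rev, p s))]
  congr 1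
  ext s
  simp only [mem_filter, mem_univ, true_and, Finset.mem_insert, Fin.ext_iff]
  omega

lemma matchedPos_nestedPairs (k : ℕ) :
    matchedPos (nestedPairs p k) =
      (univ.filter fun r : Fin m => (r : ℕ) < k ∨ m ≤ r + k).image p := by
  ext x
  simp only [mem_matchedPos, nestedPairs, mem_image, mem_filter, mem_univ, true_and]
  constructor
  · rintro ⟨_, ⟨s, hs, rfl⟩, hx | hx⟩
    · exact ⟨s.rev, Or.inr (by rw [Fin.val_rev]; omega), hx⟩
    · exact ⟨s, Or.inl hs, hx⟩
  · rintro ⟨r, hr | hr, rfl⟩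
    · exact ⟨_, ⟨r, hr, rfl⟩, Or.inr rfl⟩
    · exact ⟨_, ⟨r.rev, by rw [Fin.val_rev]; omega, rfl⟩, Or.inl (by rw [Fin.rev_rev])⟩

variable {p} {M : Finset (Fin n × Fin n)}

lemma sdiff_matchedPos_union_nestedPairs (hp : Function.Injective p)
    (hM : univ \ matchedPos M = univ.image p) (k : ℕ) :
    univ \ matchedPos (M ∪ nestedPairs p k) =
      (univ.filter fun r : Fin m => k ≤ (r : ℕ) ∧ (r : ℕ) + k < m).image p := by
  rw [matchedPos_union, Finset.sdiff_union_distrib, ← Finset.sdiff_sdiff_left', hM,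
    matchedPos_nestedPairs, ← image_sdiff _ _ hp]
  congr 1
  ext r
  simp only [mem_sdiff, mem_filter, mem_univ, true_and]
  omega

/-- Once the first `r` nested pairs are formed, the unmatched positions are `p r, …, p r.rev`,
so the first unmatched position after `p r.rev` is `p r`, reached by wrapping around. -/
lemma matchStep_union_nestedPairs {w : Word n} (hp : StrictMono p)
    (hM : univ \ matchedPos M = univ.image p) {t : ℕ}
    (hw : ∀ r, w (p r) = decide ((r : ℕ) < m - t)) {r : Fin m} (hr : (r : ℕ) < min t (m - t)) :
    MatchStep w (M ∪ nestedPairs p r) (M ∪ nestedPairs p (r + 1)) := by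
  have hrev : (r.rev : ℕ) = m - (r + 1) := Fin.val_rev r
  have hunmatched : ∀ x, x ∉ matchedPos (M ∪ nestedPairs p r) ↔
      ∃ s : Fin m, (r ≤ (s : ℕ) ∧ (s : ℕ) + r < m) ∧ p s = x := fun x => by
    simpa using congrArg (x ∈ ·) (sdiff_matchedPos_union_nestedPairs hp.injective hM r)
  rw [nestedPairs_succ, union_insert]
  refine .step ((hunmatched _).mpr ⟨r.rev, by omega, rfl⟩) ?_
    (firstAfter_of_forall_mem_Icc ((hunmatched _).mpr ⟨r, by omega, rfl⟩) (hp (by omega))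
      fun x hx => ?_) ?_
  · rw [hw, hrev]
    exact decide_eq_false (by omega)
  · obtain ⟨s, hs, rfl⟩ := (hunmatched x).mp hx
    exact ⟨hp.monotone (by omega), hp.monotone (by omega)⟩
  · rw [hw]
    exact decide_eq_true (by omega)

lemma not_matchStep_union_nestedPairs {w : Word n} (hp : Function.Injective p)
    (hM : univ \ matchedPos M = univ.image p) {t : ℕ}
    (hw : ∀ r, w (p r) = decide ((r : ℕ) < m - t)) (N : Finset (Fin n × Fin n)) :
    ¬ MatchStep w (M ∪ nestedPairs p (min t (m - t))) N := by
  intro hN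
  obtain ⟨i, j, hi, hj, hwi, hwj⟩ := exists_matchStep_iff.mp ⟨N, hN⟩
  have hunmatched := sdiff_matchedPos_union_nestedPairs hp hM (min t (m - t))
  obtain ⟨r, hr, rfl⟩ := mem_image.mp (hunmatched ▸ mem_sdiff.mpr ⟨mem_univ i, hi⟩)
  obtain ⟨s, hs, rfl⟩ := mem_image.mp (hunmatched ▸ mem_sdiff.mpr ⟨mem_univ _, hj⟩)
  simp only [mem_filter, mem_univ, true_and] at hr hs
  simp only [hw, decide_eq_false_iff_not, decide_eq_true_eq] at hwi hwj
  omega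

theorem matching_eq_union_nestedPairs {w : Word n} (hM : ReflTransGen (MatchStep w) ∅ M)
    (hp : StrictMono p) (hMp : univ \ matchedPos M = univ.image p) {t : ℕ}
    (hw : ∀ r, w (p r) = decide ((r : ℕ) < m - t)) :
    matching w = M ∪ nestedPairs p (min t (m - t)) := by
  refine matching_eq_of_isMaximalMatching ⟨?_, not_matchStep_union_nestedPairs hp.injective hMp hw⟩
  suffices ∀ k ≤ min t (m - t), ReflTransGen (MatchStep w) ∅ (M ∪ nestedPairs p k) from
    this _ le_rfl
  intro k hk
  induction k with
  | zero => simpa [nestedPairs_zero] using hM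
  | succ k ih =>
    exact (ih (by omega)).tail
      (matchStep_union_nestedPairs hp hMp hw (r := ⟨k, by omega⟩) hk)

end NestedPairs

section WordsWT

variable {n : ℕ} {w : Word n}

lemma wT_of_notMem_unmatchedPos (t : ℕ) {j : Fin n} (hj : j ∉ unmatchedPos w) :
    wT w t j = w j := by
  simp [wT, hj]

lemma card_unmatchedPos_filter_ge {m : ℕ} {p : Fin m → Fin n} (hp : StrictMono p)
    (himg : unmatchedPos w = univ.image p) (r : Fin m) :
    ((unmatchedPos w).filter fun k => p r ≤ k).card = m - r := by
  rw [himg, filter_image, card_image_of_injective _ hp.injective]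
  simp only [hp.le_iff_le, ← Fin.card_Ici]
  congr 1
  ext s
  simp

lemma wT_apply_of_eq_image (hmaj : zeros w < wt w) {m : ℕ} {p : Fin m → Fin n}
    (hp : StrictMono p) (himg : unmatchedPos w = univ.image p) (t : ℕ) (r : Fin m) :
    wT w t (p r) = decide ((r : ℕ) < m - t) := by
  have hr : p r ∈ unmatchedPos w := himg ▸ mem_image_of_mem p (mem_univ r)
  have hcard := card_unmatchedPos_filter_ge hp himg r
  have := r.isLt
  simp only [wT, hr, hcard, true_and]
  by_cases h : (r : ℕ) < m - t
  · rw [if_neg (by omega), eq_true_of_mem_unmatchedPos hmaj hr, decide_eq_true h]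
  · rw [if_pos (by omega), decide_eq_false h]

end WordsWT

theorem matching_of_wT_general (n : ℕ) (w : Word n)
    (hmaj : zeros w < wt w)
    (m : ℕ)
    (p : Fin m → Fin n) (hmono : StrictMono p)
    (hrange : ∀ j : Fin n, j ∈ unmatchedPos w ↔ ∃ s : Fin m, p s = j)
    (t : ℕ) :
    matching (wT w t) =
      matching w ∪
        (Finset.univ.filter fun s : Fin m => (s : ℕ) < min t (m - t)).image
          (fun s => (p s.rev, p s)) ∧
    unmatchedPos (wT w t) =
      (Finset.univ.filter fun s : Fin m =>
        min t (m - t) ≤ (s : ℕ) ∧ (s : ℕ) < max t (m - t)).image p := by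
  have himg : unmatchedPos w = univ.image p := by
    ext j
    simp [hrange]
  have hreach : ReflTransGen (MatchStep (wT w t)) ∅ (matching w) :=
    (isMaximalMatching_matching w).1.matchStep_of_eqOn fun x hx =>
      wT_of_notMem_unmatchedPos t (by simp [unmatchedPos, hx])
  have hmatch : matching (wT w t) = matching w ∪ nestedPairs p (min t (m - t)) :=
    matching_eq_union_nestedPairs hreach hmono himg (wT_apply_of_eq_image hmaj hmono himg t)
  refine ⟨hmatch, ?_⟩
  rw [unmatchedPos, hmatch, sdiff_matchedPos_union_nestedPairs hmono.injective himg]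
  congr 1
  ext r
  simp only [mem_filter, mem_univ, true_and]
  omega

/-- Let `w` be a Lyndon word with strictly more `1`s than `0`s and
unmatched positions `p 0 < … < p (m-1)` (0-indexed; all carrying `1`).  For every
`0 ≤ t ≤ m`, the matched pairs of `w_t` are exactly those of `w` together with the
nested pairs `{p s, p (m-1-s)}` for `s < min t (m−t)` (the `0` at `p (m-1-s)`, the `1` at
`p s`), and the unmatched positions of `w_t` are exactly the `p s` with
`min t (m−t) ≤ s < max t (m−t)`.  In particular the successively created pairs are
nested, each new pair innermost among those created so far. -/
theorem matching_of_wT (n : ℕ) [NeZero n] (w : Word n)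
    (hL : IsLyndon w) (hmaj : zeros w < wt w)
    (m : ℕ) (hm : (unmatchedPos w).card = m)
    (p : Fin m → Fin n) (hmono : StrictMono p)
    (hrange : ∀ j : Fin n, j ∈ unmatchedPos w ↔ ∃ s : Fin m, p s = j)
    (t : ℕ) (ht : t ≤ m) :
    matching (wT w t) =
      matching w ∪
        (Finset.univ.filter fun s : Fin m => (s : ℕ) < min t (m - t)).image
          (fun s => (p s.rev, p s)) ∧
    unmatchedPos (wT w t) =
      (Finset.univ.filter fun s : Fin m =>
        min t (m - t) ≤ (s : ℕ) ∧ (s : ℕ) < max t (m - t)).image p :=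
  matching_of_wT_general n w hmaj m p hmono hrange t
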